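/- arXiv:1702.06480 — 2 statements merged into one kernel-verified Lean document; each statement's English description precedes it below -/
import Mathlib

section
/- The linear map L satisfies: (i) det L = 1; (ii) (L J)·k = κ J_n for every J = (Ĵ, J_n) ∈ ℝ^{n−1}×ℝ; (iii) ‖L J‖² = κ J_n² + ‖π_k^⊥(Âᵀ Ĵ)‖² for every J. Moreover, if in addition k ∈ ℤⁿ, Â has integer entries and max_{i,j}|Â_{ij}| ≤ max_j|k_j|, then there exists a constant c > 0 depending only on n such that the operator norms satisfy ‖L‖ ≤ c‖k‖ and ‖L⁻¹‖ ≤ c‖k‖^{n−1}. -/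
open scoped Matrix

/-- Euclidean norm on `Fin n → ℝ`. -/
noncomputable def enorm' {n : ℕ} (y : Fin n → ℝ) : ℝ := Real.sqrt (∑ i, y i ^ 2)

/-- Euclidean dot product on `Fin n → ℝ`. -/
def edot {n : ℕ} (x y : Fin n → ℝ) : ℝ := ∑ i, x i * y i

/-- Orthogonal projection onto the hyperplane orthogonal to `k`:
`π_k^⊥ y = y − κ⁻¹ (y·k) k` with `κ = ‖k‖²`. -/
noncomputable def eproj {n : ℕ} (k y : Fin n → ℝ) : Fin n → ℝ :=
  y - ((∑ i, k i ^ 2)⁻¹ * edot y k) • k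

/-- The linear map `L : ℝⁿ → ℝⁿ`, `L(Ĵ, J_n) = J_n k + π_k^⊥(Âᵀ Ĵ)`, viewed as an
endomorphism of `ℝⁿ` (identifying `J` with `(Ĵ, J_n)`, `Ĵ` the first `n−1` coordinates). -/
noncomputable def Lfull {m : ℕ} (k : Fin (m + 1) → ℝ)
    (Ahat : Matrix (Fin m) (Fin (m + 1)) ℝ) :
    (Fin (m + 1) → ℝ) → Fin (m + 1) → ℝ :=
  fun J => J (Fin.last m) • k + eproj k (Ahatᵀ.mulVec fun i : Fin m => J i.castSucc)

/-!
Let `A` be the matrix with rows `Â` and `k`. Then `L = Aᵀ ∘ E`, where the shear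
`E J = J - (κ⁻¹ (Â k) · Ĵ) eₙ` is a rank-one perturbation of the identity with determinant `1`,
so `det L = det A = 1`. Since `π_k^⊥` maps into `k^⊥`, (ii) and (iii) are Pythagoras; (iii),
`‖π_k^⊥‖ ≤ 1` and the entry bound on `Â` give `‖L‖ = O(‖k‖)`. Hence every entry of the matrix
of `L` is `O(‖k‖)`, and as `det L = 1` the inverse is the adjugate, whose entries are
`m × m` minors and so `O(‖k‖^m)`.
-/

section Euclidean

variable {n : ℕ}

lemma enorm'_nonneg (y : Fin n → ℝ) : 0 ≤ enorm' y := Real.sqrt_nonneg _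

lemma sq_enorm' (y : Fin n → ℝ) : enorm' y ^ 2 = ∑ i, y i ^ 2 :=
  Real.sq_sqrt (Finset.sum_nonneg fun _ _ => sq_nonneg _)

lemma abs_le_enorm' (y : Fin n → ℝ) (i : Fin n) : |y i| ≤ enorm' y := by
  rw [← Real.sqrt_sq_eq_abs]
  exact Real.sqrt_le_sqrt (Finset.single_le_sum (fun j _ => sq_nonneg (y j)) (Finset.mem_univ i))

lemma enorm'_le_sum_abs (y : Fin n → ℝ) : enorm' y ≤ ∑ i, |y i| := by
  refine Real.sqrt_le_iff.2 ⟨Finset.sum_nonneg fun _ _ => abs_nonneg _, ?_⟩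
  simpa only [sq_abs] using Finset.sum_sq_le_sq_sum_of_nonneg (s := Finset.univ)
    (f := fun i => |y i|) fun _ _ => abs_nonneg _

lemma enorm'_single_one (j : Fin n) : enorm' (Pi.single j 1) = 1 := by
  simp [enorm', apply_ite (· ^ 2), Pi.single_apply]

lemma sq_enorm'_init_add_last {m : ℕ} (J : Fin (m + 1) → ℝ) :
    enorm' (fun i : Fin m => J i.castSucc) ^ 2 + J (Fin.last m) ^ 2 = enorm' J ^ 2 := by
  simp only [sq_enorm', Fin.sum_univ_castSucc]

lemma iSup_abs_le_enorm' [NeZero n] (y : Fin n → ℝ) : ⨆ i, |y i| ≤ enorm' y :=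
  ciSup_le (abs_le_enorm' y)

lemma sum_sq_pos {k : Fin n → ℝ} (hk : k ≠ 0) : 0 < ∑ i, k i ^ 2 := by
  obtain ⟨i, hi⟩ := Function.ne_iff.mp hk
  exact (pow_two_pos_of_ne_zero hi).trans_le
    (Finset.single_le_sum (fun j _ => sq_nonneg (k j)) (Finset.mem_univ i))

lemma enorm'_mulVec_le {p q : ℕ} {M : Matrix (Fin p) (Fin q) ℝ} {b : ℝ}
    (hM : ∀ i j, |M i j| ≤ b) (y : Fin q → ℝ) :
    enorm' (M *ᵥ y) ≤ p * q * b * enorm' y := by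
  have hcoord : ∀ i, |(M *ᵥ y) i| ≤ q * b * enorm' y := fun i =>
    calc |(M *ᵥ y) i| ≤ ∑ j, |M i j| * |y j| := by
          simpa only [Matrix.mulVec, dotProduct, abs_mul] using
            Finset.abs_sum_le_sum_abs (fun j => M i j * y j) Finset.univ
      _ ≤ ∑ _j : Fin q, b * enorm' y := by
          gcongr with j
          · exact (abs_nonneg _).trans (hM i j)
          · exact hM i j
          · exact abs_le_enorm' y j
      _ = q * b * enorm' y := by simp [mul_assoc]
  calc enorm' (M *ᵥ y) ≤ ∑ i, |(M *ᵥ y) i| := enorm'_le_sum_abs _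
    _ ≤ ∑ _i : Fin p, q * b * enorm' y := Finset.sum_le_sum fun i _ => hcoord i
    _ = p * q * b * enorm' y := by simp [mul_assoc]

end Euclidean

section Projection

variable {n : ℕ} {k : Fin n → ℝ}

lemma edot_eproj_self (hk : k ≠ 0) (y : Fin n → ℝ) : edot (eproj k y) k = 0 := by
  have hκ := (sum_sq_pos hk).ne'
  simp only [eproj, edot, Pi.sub_apply, Pi.smul_apply, smul_eq_mul, sub_mul,
    Finset.sum_sub_distrib, mul_assoc, ← Finset.mul_sum, ← sq]
  field_simp
  ring

lemma edot_smul_add_of_edot_eq_zero {p : Fin n → ℝ} (hp : edot p k = 0) (a : ℝ) :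
    edot (a • k + p) k = (∑ i, k i ^ 2) * a := by
  simp only [edot] at hp ⊢
  simp only [Pi.add_apply, Pi.smul_apply, smul_eq_mul, add_mul, Finset.sum_add_distrib, hp,
    add_zero, mul_assoc, ← Finset.mul_sum, ← sq]
  ring

lemma sq_enorm'_smul_add_of_edot_eq_zero {p : Fin n → ℝ} (hp : edot p k = 0) (a : ℝ) :
    enorm' (a • k + p) ^ 2 = (∑ i, k i ^ 2) * a ^ 2 + enorm' p ^ 2 := by
  have expand : ∀ i, (a * k i + p i) ^ 2 = a ^ 2 * k i ^ 2 + 2 * a * (p i * k i) + p i ^ 2 :=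
    fun i => by ring
  simp only [edot] at hp
  simp only [sq_enorm', Pi.add_apply, Pi.smul_apply, smul_eq_mul, expand,
    Finset.sum_add_distrib, ← Finset.mul_sum, hp]
  ring

lemma smul_add_eproj (y : Fin n → ℝ) :
    ((∑ i, k i ^ 2)⁻¹ * edot y k) • k + eproj k y = y := by
  rw [eproj, add_sub_cancel]

lemma enorm'_eproj_le (hk : k ≠ 0) (y : Fin n → ℝ) : enorm' (eproj k y) ≤ enorm' y := by
  refine le_of_pow_le_pow_left₀ two_ne_zero (enorm'_nonneg y) ?_
  conv_rhs => rw [← smul_add_eproj (k := k) y,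
    sq_enorm'_smul_add_of_edot_eq_zero (edot_eproj_self hk y)]
  exact le_add_of_nonneg_left (by positivity)

end Projection

section LinearMap

variable {m : ℕ} {k : Fin (m + 1) → ℝ}

lemma edot_Lfull (hk : k ≠ 0) (Ahat : Matrix (Fin m) (Fin (m + 1)) ℝ) (J : Fin (m + 1) → ℝ) :
    edot (Lfull k Ahat J) k = (∑ i, k i ^ 2) * J (Fin.last m) :=
  edot_smul_add_of_edot_eq_zero (edot_eproj_self hk _) _

lemma sq_enorm'_Lfull (hk : k ≠ 0) (Ahat : Matrix (Fin m) (Fin (m + 1)) ℝ)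
    (J : Fin (m + 1) → ℝ) :
    enorm' (Lfull k Ahat J) ^ 2 = (∑ i, k i ^ 2) * J (Fin.last m) ^ 2 +
      enorm' (eproj k (Ahatᵀ.mulVec fun i : Fin m => J i.castSucc)) ^ 2 :=
  sq_enorm'_smul_add_of_edot_eq_zero (edot_eproj_self hk _) _

lemma enorm'_Lfull_le (hk : k ≠ 0) {Ahat : Matrix (Fin m) (Fin (m + 1)) ℝ}
    (hA : ∀ i j, |Ahat i j| ≤ ⨆ j', |k j'|) (J : Fin (m + 1) → ℝ) :
    enorm' (Lfull k Ahat J) ≤ (((m : ℝ) + 1) * m + 1) * enorm' k * enorm' J := by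
  refine le_of_pow_le_pow_left₀ two_ne_zero (by positivity [enorm'_nonneg k, enorm'_nonneg J]) ?_
  rw [sq_enorm'_Lfull hk, ← sq_enorm' k, mul_pow, mul_pow, ← sq_enorm'_init_add_last J]
  set Jhat : Fin m → ℝ := fun i => J i.castSucc
  have hAhat : enorm' (eproj k (Ahatᵀ *ᵥ Jhat)) ≤ ((m : ℝ) + 1) * m * enorm' k * enorm' Jhat :=
    (enorm'_eproj_le hk _).trans <| by
      simpa using enorm'_mulVec_le (M := Ahatᵀ)
        (fun i j => (hA j i).trans (iSup_abs_le_enorm' k)) Jhat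
  have hP := pow_le_pow_left₀ (enorm'_nonneg _) hAhat 2
  have hm : (0 : ℝ) ≤ ((m : ℝ) + 1) * m := by positivity
  have hkx := mul_nonneg (sq_nonneg (enorm' k)) (sq_nonneg (enorm' Jhat))
  have hkt := mul_nonneg (sq_nonneg (enorm' k)) (sq_nonneg (J (Fin.last m)))
  nlinarith [mul_nonneg hm hkx, mul_nonneg hm hkt, mul_nonneg (mul_nonneg hm hm) hkt]

end LinearMap

section Matrix

open Matrix

variable {m : ℕ}

def withLastRow {R ι : Type*} (Ahat : Matrix (Fin m) ι R) (k : ι → R) :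
    Matrix (Fin (m + 1)) ι R :=
  Matrix.of fun i j => if h : (i : ℕ) < m then Ahat ⟨i, h⟩ j else k j

lemma transpose_withLastRow_mulVec {R ι : Type*} [CommSemiring R] (Ahat : Matrix (Fin m) ι R)
    (k : ι → R) (x : Fin (m + 1) → R) :
    (withLastRow Ahat k)ᵀ *ᵥ x = Ahatᵀ *ᵥ (fun i => x i.castSucc) + x (Fin.last m) • k := by
  ext j
  simp [withLastRow, mulVec, dotProduct, Fin.sum_univ_castSucc, mul_comm]

noncomputable def Lmatrix (k : Fin (m + 1) → ℝ) (Ahat : Matrix (Fin m) (Fin (m + 1)) ℝ) :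
    Matrix (Fin (m + 1)) (Fin (m + 1)) ℝ :=
  (withLastRow Ahat k)ᵀ * (1 + vecMulVec (Pi.single (Fin.last m) 1)
    (-Fin.snoc (α := fun _ => ℝ) ((∑ i, k i ^ 2)⁻¹ • (Ahat *ᵥ k)) 0))

lemma Lmatrix_mulVec (k : Fin (m + 1) → ℝ) (Ahat : Matrix (Fin m) (Fin (m + 1)) ℝ)
    (J : Fin (m + 1) → ℝ) : Lmatrix k Ahat *ᵥ J = Lfull k Ahat J := by
  set Jhat : Fin m → ℝ := fun i => J i.castSucc
  have hcoeff : Fin.snoc (α := fun _ => ℝ) ((∑ i, k i ^ 2)⁻¹ • (Ahat *ᵥ k)) 0 ⬝ᵥ J =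
      (∑ i, k i ^ 2)⁻¹ * edot (Ahatᵀ *ᵥ Jhat) k := by
    rw [dotProduct, Fin.sum_univ_castSucc]
    simp only [Fin.snoc_castSucc, Fin.snoc_last, zero_mul, add_zero, Pi.smul_apply,
      smul_eq_mul, mul_assoc, ← Finset.mul_sum]
    change _ * ((Ahat *ᵥ k) ⬝ᵥ Jhat) = _ * ((Ahatᵀ *ᵥ Jhat) ⬝ᵥ k)
    rw [mulVec_transpose, dotProduct_comm, dotProduct_mulVec]
  rw [Lmatrix, ← mulVec_mulVec, add_mulVec, one_mulVec, vecMulVec_mulVec,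
    transpose_withLastRow_mulVec]
  simp only [Pi.add_apply, Pi.smul_apply, Pi.single_apply, Fin.castSucc_ne_last, if_false,
    if_true, neg_dotProduct, hcoeff, MulOpposite.smul_eq_mul_unop, MulOpposite.unop_op, zero_mul, one_mul, add_zero, Lfull, eproj]
  module

lemma det_Lmatrix {k : Fin (m + 1) → ℝ} {Ahat : Matrix (Fin m) (Fin (m + 1)) ℝ}
    (hdet : (withLastRow Ahat k).det = 1) : (Lmatrix k Ahat).det = 1 := by
  rw [Lmatrix, det_mul, det_transpose, hdet, vecMulVec_eq (Fin 1),
    det_one_add_replicateCol_mul_replicateRow]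
  simp

end Matrix

lemma abs_adjugate_apply_le {n : ℕ} {A : Matrix (Fin (n + 1)) (Fin (n + 1)) ℝ} {b : ℝ}
    (hA : ∀ i j, |A i j| ≤ b) (i j : Fin (n + 1)) : |A.adjugate i j| ≤ n.factorial * b ^ n := by
  rw [Matrix.adjugate_fin_succ_eq_det_submatrix, abs_mul, abs_pow, abs_neg, abs_one, one_pow,
    one_mul]
  simpa using Matrix.det_le (A := A.submatrix j.succAbove i.succAbove) (abv := AbsoluteValue.abs)
    fun a b => hA _ _

section Bounds

variable {m : ℕ} {k : Fin (m + 1) → ℝ} {Ahat : Matrix (Fin m) (Fin (m + 1)) ℝ}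

lemma abs_Lmatrix_apply_le (hk : k ≠ 0) (hA : ∀ i j, |Ahat i j| ≤ ⨆ j', |k j'|) (i j : Fin (m + 1)) :
    |Lmatrix k Ahat i j| ≤ (((m : ℝ) + 1) * m + 1) * enorm' k :=
  calc |Lmatrix k Ahat i j| = |Lfull k Ahat (Pi.single j 1) i| := by
        rw [← Lmatrix_mulVec, Matrix.mulVec_single_one, Matrix.col_apply]
    _ ≤ enorm' (Lfull k Ahat (Pi.single j 1)) := abs_le_enorm' _ i
    _ ≤ (((m : ℝ) + 1) * m + 1) * enorm' k := by
        simpa [enorm'_single_one] using enorm'_Lfull_le hk hA (Pi.single j 1)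

lemma enorm'_adjugate_Lmatrix_mulVec_le (hk : k ≠ 0) (hA : ∀ i j, |Ahat i j| ≤ ⨆ j', |k j'|)
    (y : Fin (m + 1) → ℝ) :
    enorm' ((Lmatrix k Ahat).adjugate *ᵥ y) ≤
      ((m : ℝ) + 1) ^ 2 * m.factorial * (((m : ℝ) + 1) * m + 1) ^ m * enorm' k ^ m * enorm' y := by
  have := enorm'_mulVec_le (abs_adjugate_apply_le (abs_Lmatrix_apply_le hk hA)) y
  convert this using 1
  push_cast
  rw [mul_pow]
  ring

end Bounds

theorem stmt_4_general (m : ℕ) :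
    (∀ (k : Fin (m + 1) → ℝ), k ≠ 0 →
      ∀ Ahat : Matrix (Fin m) (Fin (m + 1)) ℝ,
        (Matrix.of fun (i j : Fin (m + 1)) =>
            if h : (i : ℕ) < m then Ahat ⟨i, h⟩ j else k j).det = 1 →
        -- (i) `det L = 1`
        ((∀ M : Matrix (Fin (m + 1)) (Fin (m + 1)) ℝ,
            (∀ J, M.mulVec J = Lfull k Ahat J) → M.det = 1) ∧
        -- (ii) `(L J)·k = κ J_n`
        (∀ J : Fin (m + 1) → ℝ,
            edot (Lfull k Ahat J) k = (∑ i, k i ^ 2) * J (Fin.last m)) ∧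
        -- (iii) `‖L J‖² = κ J_n² + ‖π_k^⊥(Âᵀ Ĵ)‖²`
        (∀ J : Fin (m + 1) → ℝ,
            enorm' (Lfull k Ahat J) ^ 2 =
              (∑ i, k i ^ 2) * J (Fin.last m) ^ 2 +
                enorm' (eproj k (Ahatᵀ.mulVec fun i : Fin m => J i.castSucc)) ^ 2))) ∧
    -- operator-norm bounds, with a constant depending only on `n`
    (∃ c : ℝ, 0 < c ∧
      ∀ (k : Fin (m + 1) → ℝ), k ≠ 0 →
      ∀ Ahat : Matrix (Fin m) (Fin (m + 1)) ℝ,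
        (Matrix.of fun (i j : Fin (m + 1)) =>
            if h : (i : ℕ) < m then Ahat ⟨i, h⟩ j else k j).det = 1 →
        (∀ j, ∃ z : ℤ, k j = (z : ℝ)) →
        (∀ i j, ∃ z : ℤ, Ahat i j = (z : ℝ)) →
        (∀ i j, |Ahat i j| ≤ ⨆ j', |k j'|) →
        -- `‖L‖ ≤ c ‖k‖`
        (∀ J : Fin (m + 1) → ℝ,
            enorm' (Lfull k Ahat J) ≤ c * enorm' k * enorm' J) ∧
        -- `L` is invertible and `‖L⁻¹‖ ≤ c ‖k‖^{n−1}`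
        (∃ S : (Fin (m + 1) → ℝ) → Fin (m + 1) → ℝ,
            (∀ J, S (Lfull k Ahat J) = J) ∧ (∀ y, Lfull k Ahat (S y) = y) ∧
            ∀ y : Fin (m + 1) → ℝ, enorm' (S y) ≤ c * enorm' k ^ m * enorm' y)) := by
  refine ⟨fun k hk Ahat hdet => ⟨fun M hM => ?_, edot_Lfull hk Ahat, sq_enorm'_Lfull hk Ahat⟩, ?_⟩
  · rw [Matrix.ext_iff_mulVec.2 fun J => (hM J).trans (Lmatrix_mulVec k Ahat J).symm]
    exact det_Lmatrix hdet
  set B : ℝ := ((m : ℝ) + 1) * m + 1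
  refine ⟨max B (((m : ℝ) + 1) ^ 2 * m.factorial * B ^ m), by positivity,
    fun k hk Ahat hdet _ _ hA => ⟨fun J => ?_, ?_⟩⟩
  · exact (enorm'_Lfull_le hk hA J).trans <| mul_le_mul_of_nonneg_right
      (mul_le_mul_of_nonneg_right (le_max_left _ _) (enorm'_nonneg k)) (enorm'_nonneg J)
  refine ⟨((Lmatrix k Ahat).adjugate *ᵥ ·), fun J => ?_, fun y => ?_, fun y => ?_⟩
  · dsimp only
    rw [← Lmatrix_mulVec, Matrix.mulVec_mulVec, Matrix.adjugate_mul, det_Lmatrix hdet, one_smul,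
      Matrix.one_mulVec]
  · rw [← Lmatrix_mulVec, Matrix.mulVec_mulVec, Matrix.mul_adjugate, det_Lmatrix hdet, one_smul,
      Matrix.one_mulVec]
  · exact (enorm'_adjugate_Lmatrix_mulVec_le hk hA y).trans <| mul_le_mul_of_nonneg_right
      (mul_le_mul_of_nonneg_right (le_max_right _ _) (pow_nonneg (enorm'_nonneg k) m))
      (enorm'_nonneg y)

theorem stmt_4 (m : ℕ) (hm : 1 ≤ m) :
    (∀ (k : Fin (m + 1) → ℝ), k ≠ 0 →
      ∀ Ahat : Matrix (Fin m) (Fin (m + 1)) ℝ,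
        (Matrix.of fun (i j : Fin (m + 1)) =>
            if h : (i : ℕ) < m then Ahat ⟨i, h⟩ j else k j).det = 1 →
        -- (i) `det L = 1`
        ((∀ M : Matrix (Fin (m + 1)) (Fin (m + 1)) ℝ,
            (∀ J, M.mulVec J = Lfull k Ahat J) → M.det = 1) ∧
        -- (ii) `(L J)·k = κ J_n`
        (∀ J : Fin (m + 1) → ℝ,
            edot (Lfull k Ahat J) k = (∑ i, k i ^ 2) * J (Fin.last m)) ∧
        -- (iii) `‖L J‖² = κ J_n² + ‖π_k^⊥(Âᵀ Ĵ)‖²`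
        (∀ J : Fin (m + 1) → ℝ,
            enorm' (Lfull k Ahat J) ^ 2 =
              (∑ i, k i ^ 2) * J (Fin.last m) ^ 2 +
                enorm' (eproj k (Ahatᵀ.mulVec fun i : Fin m => J i.castSucc)) ^ 2))) ∧
    -- operator-norm bounds, with a constant depending only on `n`
    (∃ c : ℝ, 0 < c ∧
      ∀ (k : Fin (m + 1) → ℝ), k ≠ 0 →
      ∀ Ahat : Matrix (Fin m) (Fin (m + 1)) ℝ,
        (Matrix.of fun (i j : Fin (m + 1)) =>
            if h : (i : ℕ) < m then Ahat ⟨i, h⟩ j else k j).det = 1 →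
        (∀ j, ∃ z : ℤ, k j = (z : ℝ)) →
        (∀ i j, ∃ z : ℤ, Ahat i j = (z : ℝ)) →
        (∀ i j, |Ahat i j| ≤ ⨆ j', |k j'|) →
        -- `‖L‖ ≤ c ‖k‖`
        (∀ J : Fin (m + 1) → ℝ,
            enorm' (Lfull k Ahat J) ≤ c * enorm' k * enorm' J) ∧
        -- `L` is invertible and `‖L⁻¹‖ ≤ c ‖k‖^{n−1}`
        (∃ S : (Fin (m + 1) → ℝ) → Fin (m + 1) → ℝ,
            (∀ J, S (Lfull k Ahat J) = J) ∧ (∀ y, Lfull k Ahat (S y) = y) ∧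
            ∀ y : Fin (m + 1) → ℝ, enorm' (S y) ≤ c * enorm' k ^ m * enorm' y)) :=
  stmt_4_general m
end

section
/- Suppose moreover that K ≥ 1, 𝙺 ≥ 1, D̂ is the open Euclidean ball of radius Kⁿ centered at 0 in ℝ^{n−1}, and that the operator norm of L_k⁻¹ satisfies ‖L_k⁻¹‖ ≤ Kⁿ for every k ∈ ℤⁿ_{*,K}. Define Ω⁰ := {y ∈ ℝⁿ : ‖y‖ < 1 and |y·k| ≥ α/2 for every k ∈ ℤⁿ_{*,K}}, Ω¹ := ⋃_{k∈ℤⁿ_{*,K}} L_k(Z_k^♯), and Ω² := ⋃_{k∈ℤⁿ_{*,K}} L_k(Z'_k). Then the open unit ball {y ∈ ℝⁿ : ‖y‖ < 1} is contained in Ω⁰ ∪ Ω¹ ∪ Ω². -/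
open scoped Matrix

/-- Nonzero integer vectors whose first nonzero component is positive. -/
def ZSharp {n : ℕ} (k : Fin n → ℤ) : Prop :=
  ∃ j, 0 < k j ∧ ∀ i, i < j → k i = 0

/-- Generators of one-dimensional maximal lattices: `ℤⁿ_*`. -/
def ZStar {n : ℕ} (k : Fin n → ℤ) : Prop :=
  ZSharp k ∧ Finset.univ.gcd k = 1

/-- The 1-norm `|k|₁ = ∑ |k_i|` of an integer vector. -/
def onormZ {n : ℕ} (k : Fin n → ℤ) : ℤ := ∑ i, |k i|

/-- The real vector associated with an integer vector. -/
def intR {n : ℕ} (k : Fin n → ℤ) : Fin n → ℝ := fun i => (k i : ℝ)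

/-- `κ = ‖k‖²` for an integer vector `k`. -/
noncomputable def ksq {n : ℕ} (k : Fin n → ℤ) : ℝ := ∑ i, ((k i : ℝ)) ^ 2

/-- `Â_k`: the first `n−1` rows of `A_k`, as a real matrix. -/
def AhatR {m : ℕ} (A : Matrix (Fin (m + 1)) (Fin (m + 1)) ℤ) :
    Matrix (Fin m) (Fin (m + 1)) ℝ :=
  Matrix.of fun i j => (A i.castSucc j : ℝ)

/-- The map `L_k : ℝⁿ → ℝⁿ`, `L_k(Ĵ, J_n) = J_n k + π_k^⊥(Â_kᵀ Ĵ)` (identifying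
`J ∈ ℝⁿ` with `(Ĵ, J_n)`, where `Ĵ` is the vector of the first `n−1` coordinates). -/
noncomputable def LfullZ {m : ℕ} (k : Fin (m + 1) → ℤ)
    (A : Matrix (Fin (m + 1)) (Fin (m + 1)) ℤ) :
    (Fin (m + 1) → ℝ) → Fin (m + 1) → ℝ :=
  fun J => J (Fin.last m) • intR k +
    eproj (intR k) ((AhatR A)ᵀ.mulVec fun i : Fin m => J i.castSucc)

/-- The set `Ẑ_k ⊆ D̂` (with `D̂` the ball of radius `Kⁿ` in `ℝ^{n−1}`). -/
noncomputable def ZhatSet {m : ℕ} (K KK α : ℝ) (k : Fin (m + 1) → ℤ)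
    (A : Matrix (Fin (m + 1)) (Fin (m + 1)) ℤ) : Set (Fin m → ℝ) :=
  {Jh | enorm' Jh < K ^ (m + 1) ∧
    ∀ l : Fin (m + 1) → ℤ, ZStar l → (onormZ l : ℝ) ≤ KK → (¬∃ c : ℤ, l = c • k) →
      3 * α * KK * enorm' (intR l) / enorm' (intR k) ≤
        |edot (eproj (intR k) ((AhatR A)ᵀ.mulVec Jh)) (intR l)|}

/-- The set `Z_k^♯ = Ẑ_k × (−α/(2κ), α/(2κ)) ⊆ ℝⁿ`. -/
noncomputable def ZsharpSet {m : ℕ} (K KK α : ℝ) (k : Fin (m + 1) → ℤ)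
    (A : Matrix (Fin (m + 1)) (Fin (m + 1)) ℤ) : Set (Fin (m + 1) → ℝ) :=
  {J | (fun i : Fin m => J i.castSucc) ∈ ZhatSet K KK α k A ∧
    |J (Fin.last m)| < α / (2 * ksq k)}

/-- The set `Z'_k = (D̂ \ Ẑ_k) × (−α/κ, α/κ) ⊆ ℝⁿ`. -/
noncomputable def ZprimeSet {m : ℕ} (K KK α : ℝ) (k : Fin (m + 1) → ℤ)
    (A : Matrix (Fin (m + 1)) (Fin (m + 1)) ℤ) : Set (Fin (m + 1) → ℝ) :=
  {J | enorm' (fun i : Fin m => J i.castSucc) < K ^ (m + 1) ∧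
    (fun i : Fin m => J i.castSucc) ∉ ZhatSet K KK α k A ∧
    |J (Fin.last m)| < α / ksq k}

/-!
Suppose `|y · k| < α/2` for some admissible `k` (otherwise `y ∈ Ω⁰`). The bound
`‖J‖ ≤ Kⁿ ‖L_k J‖` makes `L_k` injective, hence surjective, so `y = L_k J`. Since `π_k^⊥`
kills the `k`-component, `y · k = J_n κ`, whence `|J_n| < α/(2κ)`; and `‖Ĵ‖ ≤ ‖J‖ ≤ Kⁿ‖y‖ < Kⁿ`.
So `Ĵ ∈ D̂`, and `J` lies in `Z_k^♯` or in `Z'_k` according as `Ĵ ∈ Ẑ_k` or not.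
-/

section EuclideanFacts

variable {n : ℕ}

lemma edot_eq_dotProduct (x y : Fin n → ℝ) : edot x y = x ⬝ᵥ y := rfl

lemma ksq_eq_dotProduct (k : Fin n → ℤ) : ksq k = intR k ⬝ᵥ intR k := by
  simp [ksq, intR, dotProduct, sq]

lemma ksq_pos {k : Fin n → ℤ} (hk : ZSharp k) : 0 < ksq k := by
  obtain ⟨j, hj, -⟩ := hk
  calc (0 : ℝ) < (k j : ℝ) ^ 2 := by positivity
    _ ≤ ksq k := Finset.single_le_sum (f := fun i => ((k i : ℝ)) ^ 2)
        (fun i _ => sq_nonneg _) (Finset.mem_univ j)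

lemma enorm'_eq_norm (y : Fin n → ℝ) : enorm' y = ‖WithLp.toLp 2 y‖ := by
  simp [enorm', EuclideanSpace.norm_eq]

lemma enorm'_eq_zero {y : Fin n → ℝ} : enorm' y = 0 ↔ y = 0 := by
  simp [enorm'_eq_norm]

lemma enorm'_init_le {m : ℕ} (J : Fin (m + 1) → ℝ) :
    enorm' (fun i : Fin m => J i.castSucc) ≤ enorm' J := by
  apply Real.sqrt_le_sqrt
  rw [Fin.sum_univ_castSucc]
  exact le_add_of_nonneg_right (sq_nonneg _)

lemma eproj_add (k x y : Fin n → ℝ) : eproj k (x + y) = eproj k x + eproj k y := by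
  simp only [eproj, edot_eq_dotProduct, add_dotProduct]
  module

lemma eproj_smul (k y : Fin n → ℝ) (c : ℝ) : eproj k (c • y) = c • eproj k y := by
  simp only [eproj, edot_eq_dotProduct, smul_dotProduct, smul_eq_mul]
  module

lemma eproj_dotProduct_self (k y : Fin n → ℝ) : eproj k y ⬝ᵥ k = 0 := by
  by_cases hk : k = 0
  · simp [hk]
  have hκ : k ⬝ᵥ k ≠ 0 := mt dotProduct_self_eq_zero.mp hk
  simp only [eproj, edot_eq_dotProduct, sub_dotProduct, smul_dotProduct, smul_eq_mul]
  rw [show ∑ i, k i ^ 2 = k ⬝ᵥ k by simp [dotProduct, sq]]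
  field_simp
  ring

end EuclideanFacts

section LfullZ

variable {m : ℕ} (k : Fin (m + 1) → ℤ) (A : Matrix (Fin (m + 1)) (Fin (m + 1)) ℤ)

noncomputable def LfullZ.linearMap : (Fin (m + 1) → ℝ) →ₗ[ℝ] (Fin (m + 1) → ℝ) where
  toFun := LfullZ k A
  map_add' x y := by
    simp only [LfullZ, Pi.add_apply, add_smul]
    rw [show (fun i : Fin m => x i.castSucc + y i.castSucc)
        = (fun i : Fin m => x i.castSucc) + fun i : Fin m => y i.castSucc from rfl,
      Matrix.mulVec_add, eproj_add]
    abel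
  map_smul' c x := by
    simp only [LfullZ, Pi.smul_apply, smul_eq_mul, RingHom.id_apply, smul_add, mul_smul]
    rw [show (fun i : Fin m => c * x i.castSucc) = c • fun i : Fin m => x i.castSucc from rfl,
      Matrix.mulVec_smul, eproj_smul]

lemma LfullZ_dotProduct (J : Fin (m + 1) → ℝ) :
    LfullZ k A J ⬝ᵥ intR k = J (Fin.last m) * ksq k := by
  simp [LfullZ, add_dotProduct, eproj_dotProduct_self, ksq_eq_dotProduct]

lemma LfullZ_surjective_of_enorm_le {C : ℝ}
    (hC : ∀ J : Fin (m + 1) → ℝ, enorm' J ≤ C * enorm' (LfullZ k A J)) :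
    Function.Surjective (LfullZ k A) := by
  have hinj : Function.Injective (LfullZ.linearMap k A) := by
    refine (injective_iff_map_eq_zero _).mpr fun J hJ => enorm'_eq_zero.mp ?_
    have := hC J
    rw [show LfullZ k A J = 0 from hJ, enorm'_eq_zero.mpr rfl, mul_zero] at this
    exact le_antisymm this (Real.sqrt_nonneg _)
  exact LinearMap.injective_iff_surjective.mp hinj

end LfullZ

lemma mem_ZsharpSet_or_mem_ZprimeSet {m : ℕ} {K KK α : ℝ} {k : Fin (m + 1) → ℤ}
    {A : Matrix (Fin (m + 1)) (Fin (m + 1)) ℤ} {J : Fin (m + 1) → ℝ} (hk : 0 < ksq k)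
    (hinit : enorm' (fun i : Fin m => J i.castSucc) < K ^ (m + 1))
    (hlast : |J (Fin.last m)| < α / (2 * ksq k)) :
    J ∈ ZsharpSet K KK α k A ∨ J ∈ ZprimeSet K KK α k A := by
  by_cases hZ : (fun i : Fin m => J i.castSucc) ∈ ZhatSet K KK α k A
  · exact Or.inl ⟨hZ, hlast⟩
  have hhalf : α / ksq k = 2 * (α / (2 * ksq k)) := by field_simp
  exact Or.inr ⟨hinit, hZ, by linarith [abs_nonneg (J (Fin.last m))]⟩

theorem stmt_5_general (m : ℕ) (K KK α : ℝ) (hK : 1 ≤ K)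
    (A : (Fin (m + 1) → ℤ) → Matrix (Fin (m + 1)) (Fin (m + 1)) ℤ)
    -- `‖L_k⁻¹‖ ≤ Kⁿ`
    (hinv : ∀ k, ZStar k → (onormZ k : ℝ) ≤ K →
      ∀ J : Fin (m + 1) → ℝ, enorm' J ≤ K ^ (m + 1) * enorm' (LfullZ k (A k) J)) :
    {y : Fin (m + 1) → ℝ | enorm' y < 1} ⊆
      ({y : Fin (m + 1) → ℝ | enorm' y < 1 ∧
          ∀ k : Fin (m + 1) → ℤ, ZStar k → (onormZ k : ℝ) ≤ K →
            α / 2 ≤ |edot y (intR k)|} ∪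
        (⋃ k ∈ {k : Fin (m + 1) → ℤ | ZStar k ∧ (onormZ k : ℝ) ≤ K},
          LfullZ k (A k) '' ZsharpSet K KK α k (A k)) ∪
        (⋃ k ∈ {k : Fin (m + 1) → ℤ | ZStar k ∧ (onormZ k : ℝ) ≤ K},
          LfullZ k (A k) '' ZprimeSet K KK α k (A k))) := by
  intro y hy
  by_cases hΩ₀ : ∀ k : Fin (m + 1) → ℤ, ZStar k → (onormZ k : ℝ) ≤ K →
      α / 2 ≤ |edot y (intR k)|
  · exact Or.inl (Or.inl ⟨hy, hΩ₀⟩)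
  push Not at hΩ₀
  obtain ⟨k, hk, hkK, hyk⟩ := hΩ₀
  have hκ := ksq_pos hk.1
  obtain ⟨J, rfl⟩ := LfullZ_surjective_of_enorm_le k (A k) (hinv k hk hkK) y
  have hlast : |J (Fin.last m)| < α / (2 * ksq k) := by
    rw [edot_eq_dotProduct, LfullZ_dotProduct, abs_mul, abs_of_pos hκ] at hyk
    rw [lt_div_iff₀ (by positivity)]
    linarith
  have hinit : enorm' (fun i : Fin m => J i.castSucc) < K ^ (m + 1) :=
    calc _ ≤ enorm' J := enorm'_init_le J
      _ ≤ K ^ (m + 1) * enorm' (LfullZ k (A k) J) := hinv k hk hkK J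
      _ < K ^ (m + 1) := mul_lt_of_lt_one_right (by positivity) hy
  rcases mem_ZsharpSet_or_mem_ZprimeSet (A := A k) (KK := KK) hκ hinit hlast with hJ | hJ
  · exact Or.inl (Or.inr (Set.mem_biUnion ⟨hk, hkK⟩ ⟨J, hJ, rfl⟩))
  · exact Or.inr (Set.mem_biUnion ⟨hk, hkK⟩ ⟨J, hJ, rfl⟩)

theorem stmt_5 (m : ℕ) (hm : 1 ≤ m) (K KK α : ℝ) (hK : 1 ≤ K) (hKK : 1 ≤ KK)
    (hα : 0 < α)
    (A : (Fin (m + 1) → ℤ) → Matrix (Fin (m + 1)) (Fin (m + 1)) ℤ)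
    (hrow : ∀ k, ZStar k → (onormZ k : ℝ) ≤ K → ∀ j, A k (Fin.last m) j = k j)
    (hdet : ∀ k, ZStar k → (onormZ k : ℝ) ≤ K → (A k).det = 1)
    -- `‖L_k⁻¹‖ ≤ Kⁿ`
    (hinv : ∀ k, ZStar k → (onormZ k : ℝ) ≤ K →
      ∀ J : Fin (m + 1) → ℝ, enorm' J ≤ K ^ (m + 1) * enorm' (LfullZ k (A k) J)) :
    {y : Fin (m + 1) → ℝ | enorm' y < 1} ⊆
      ({y : Fin (m + 1) → ℝ | enorm' y < 1 ∧
          ∀ k : Fin (m + 1) → ℤ, ZStar k → (onormZ k : ℝ) ≤ K →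
            α / 2 ≤ |edot y (intR k)|} ∪
        (⋃ k ∈ {k : Fin (m + 1) → ℤ | ZStar k ∧ (onormZ k : ℝ) ≤ K},
          LfullZ k (A k) '' ZsharpSet K KK α k (A k)) ∪
        (⋃ k ∈ {k : Fin (m + 1) → ℤ | ZStar k ∧ (onormZ k : ℝ) ≤ K},
          LfullZ k (A k) '' ZprimeSet K KK α k (A k))) :=
  stmt_5_general m K KK α hK A hinv
end
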